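/- Let (X,d) be a length metric space and let 𝓚 be a collection of subsets of X; for each K ∈ 𝓚 let C(K) be a subset of X with K ⊆ C(K), and set 𝓒 = { C(K) : K ∈ 𝓚 }. Let d₁ and d₂ denote the electric pseudometrics on X obtained by electrocuting the members of 𝓚 and of 𝓒, respectively. If there exists n ∈ ℕ such that every C ∈ 𝓒 has diameter at most n with respect to d₁, then the identity map of the underlying set X is a quasi-isometry from (X,d₁) to (X,d₂) with constants depending only on n; in particular d₂(x,y) ≤ d₁(x,y) for all x, y, and there is A = A(n) with d₁(x,y) ≤ A·d₂(x,y) + A for all x, y ∈ X. -/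
import Mathlib


noncomputable section

open Metric Set

/-- A geodesic segment from `a` to `b` in a metric space:
an isometric parametrization of the interval `[0, dist a b]`. -/
def IsGeodesicSegment {X : Type*} [MetricSpace X] (f : ℝ → X) (a b : X) : Prop :=
  f 0 = a ∧ f (dist a b) = b ∧
    ∀ s ∈ Set.Icc (0 : ℝ) (dist a b), ∀ t ∈ Set.Icc (0 : ℝ) (dist a b),
      dist (f s) (f t) = |s - t|

/-- The image of a geodesic segment from `a` to `b`. -/
def geodImage {X : Type*} [MetricSpace X] (f : ℝ → X) (a b : X) : Set X :=
  f '' Set.Icc (0 : ℝ) (dist a b)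

/-- A geodesic metric space: any two points are joined by a geodesic segment. -/
def IsGeodesicSpace (X : Type*) [MetricSpace X] : Prop :=
  ∀ a b : X, ∃ f : ℝ → X, IsGeodesicSegment f a b

/-- `δ`-hyperbolicity: every geodesic triangle is `δ`-thin, i.e. each side is contained in
the `δ`-neighborhood of the union of the other two sides. -/
def IsDeltaHyperbolic (X : Type*) [MetricSpace X] (δ : ℝ) : Prop :=
  ∀ (a b c : X) (f g h : ℝ → X),
    IsGeodesicSegment f a b → IsGeodesicSegment g b c → IsGeodesicSegment h a c →
    ∀ x ∈ geodImage h a c, ∃ y ∈ geodImage f a b ∪ geodImage g b c, dist x y ≤ δ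

/-- A subset `Z` is `C`-quasiconvex: every geodesic segment joining two points of `Z`
lies in the `C`-neighborhood of `Z`. -/
def IsQuasiconvexSet {X : Type*} [MetricSpace X] (C : ℝ) (Z : Set X) : Prop :=
  ∀ a ∈ Z, ∀ b ∈ Z, ∀ f : ℝ → X, IsGeodesicSegment f a b →
    ∀ x ∈ geodImage f a b, ∃ z ∈ Z, dist x z ≤ C

/-- Two points lie in a common member of `𝓗`. -/
def sameH {X : Type*} [MetricSpace X] (𝓗 : Set (Set X)) (u v : X) : Prop :=
  ∃ H ∈ 𝓗, u ∈ H ∧ v ∈ H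

open Classical in
/-- Cost of a single step in the electric space `E(X,𝓗)`: if both points lie in a common
`H ∈ 𝓗`, one may travel through the attached cone `H × [0,1]` (at cost at most `2`:
up to the zero-metric top, along it for free, and back down). -/
noncomputable def eStep {X : Type*} [MetricSpace X] (𝓗 : Set (Set X)) (u v : X) : ℝ :=
  if sameH 𝓗 u v then min (dist u v) 2 else dist u v

/-- The electric pseudometric `d_e` on `X`, induced from the electric space `E(X,𝓗)`:
the infimum of lengths of finite chains, where travelling inside a member of `𝓗` is
shortcut through the attached cone. -/
noncomputable def eDist {X : Type*} [MetricSpace X] (𝓗 : Set (Set X)) (x y : X) : ℝ :=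
  sInf { r : ℝ | ∃ (n : ℕ) (z : ℕ → X), z 0 = x ∧ z n = y ∧
    r = ∑ i ∈ Finset.range n, eStep 𝓗 (z i) (z (i + 1)) }

/-- A `D`-separated collection of subsets: distinct members are at distance at least `D`. -/
def IsDSeparated {X : Type*} [MetricSpace X] (D : ℝ) (𝓗 : Set (Set X)) : Prop :=
  ∀ H₁ ∈ 𝓗, ∀ H₂ ∈ 𝓗, H₁ ≠ H₂ → ∀ x ∈ H₁, ∀ y ∈ H₂, D ≤ dist x y

/-- A `(K, ε)`-quasigeodesic, defined on `[s,t]`, with respect to a (pseudo)distance `ρ`. -/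
def IsQuasigeodesicWrt {X : Type*} (ρ : X → X → ℝ) (K ε : ℝ) (f : ℝ → X) (s t : ℝ) : Prop :=
  s ≤ t ∧ ∀ u ∈ Set.Icc s t, ∀ v ∈ Set.Icc s t,
    (1 / K) * |u - v| - ε ≤ ρ (f u) (f v) ∧ ρ (f u) (f v) ≤ K * |u - v| + ε

open scoped ENNReal

/-- A length metric space: the distance between two points is the infimum of lengths of
continuous paths joining them. -/
def IsLengthSpace (X : Type*) [MetricSpace X] : Prop :=
  ∀ x y : X, edist x y =
    ⨅ (p : ℝ → X) (_ : p 0 = x) (_ : p 1 = y) (_ : ContinuousOn p (Set.Icc (0 : ℝ) 1)),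
      eVariationOn p (Set.Icc (0 : ℝ) 1)

section ElecAux

variable {X : Type*} [MetricSpace X]

/-- The set of chain-lengths defining `eDist`. -/
def eSet (𝓗 : Set (Set X)) (x y : X) : Set ℝ :=
  { r : ℝ | ∃ (n : ℕ) (z : ℕ → X), z 0 = x ∧ z n = y ∧
    r = ∑ i ∈ Finset.range n, eStep 𝓗 (z i) (z (i + 1)) }

lemma eDist_eq (𝓗 : Set (Set X)) (x y : X) : eDist 𝓗 x y = sInf (eSet 𝓗 x y) := rfl

lemma eStep_nonneg (𝓗 : Set (Set X)) (u v : X) : 0 ≤ eStep 𝓗 u v := by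
  unfold eStep
  split
  · exact le_min dist_nonneg (by norm_num)
  · exact dist_nonneg

lemma eStep_le_dist (𝓗 : Set (Set X)) (u v : X) : eStep 𝓗 u v ≤ dist u v := by
  unfold eStep
  split
  · exact min_le_left _ _
  · exact le_rfl

lemma eSet_nonempty (𝓗 : Set (Set X)) (x y : X) : (eSet 𝓗 x y).Nonempty := by
  refine ⟨eStep 𝓗 x y, 1, fun i => if i = 0 then x else y, by simp, by simp, by simp⟩

lemma eSet_bddBelow (𝓗 : Set (Set X)) (x y : X) : BddBelow (eSet 𝓗 x y) := by
  refine ⟨0, ?_⟩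
  rintro r ⟨m, z, -, -, rfl⟩
  exact Finset.sum_nonneg fun i _ => eStep_nonneg 𝓗 _ _

lemma eDist_nonneg (𝓗 : Set (Set X)) (x y : X) : 0 ≤ eDist 𝓗 x y := by
  rw [eDist_eq]
  apply le_csInf (eSet_nonempty 𝓗 x y)
  rintro r ⟨m, z, -, -, rfl⟩
  exact Finset.sum_nonneg fun i _ => eStep_nonneg 𝓗 _ _

lemma eDist_le_eStep (𝓗 : Set (Set X)) (x y : X) : eDist 𝓗 x y ≤ eStep 𝓗 x y := by
  rw [eDist_eq]
  exact csInf_le (eSet_bddBelow 𝓗 x y)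
    ⟨1, fun i => if i = 0 then x else y, by simp, by simp, by simp⟩

lemma eDist_self_nonpos (𝓗 : Set (Set X)) (x : X) : eDist 𝓗 x x ≤ 0 := by
  rw [eDist_eq]
  exact csInf_le (eSet_bddBelow 𝓗 x x) ⟨0, fun _ => x, rfl, rfl, by simp⟩

lemma eDist_triangle' (𝓗 : Set (Set X)) (x y z : X) :
    eDist 𝓗 x z ≤ eDist 𝓗 x y + eDist 𝓗 y z := by
  have key : ∀ a ∈ eSet 𝓗 x y, ∀ b ∈ eSet 𝓗 y z, eDist 𝓗 x z ≤ a + b := by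
    rintro a ⟨m₁, z₁, h10, h11, rfl⟩ b ⟨m₂, z₂, h20, h21, rfl⟩
    set w : ℕ → X := fun i => if i ≤ m₁ then z₁ i else z₂ (i - m₁) with hw
    have hw0 : w 0 = x := by simp [hw, h10]
    have hwend : w (m₁ + m₂) = z := by
      by_cases h : m₂ = 0
      · subst h
        simp only [hw, Nat.add_zero, le_refl, if_pos]
        rw [h11, ← h20, h21]
      · have : ¬ m₁ + m₂ ≤ m₁ := by omega
        simp only [hw, this, if_false, Nat.add_sub_cancel_left, h21]
    have hsum : ∑ i ∈ Finset.range (m₁ + m₂), eStep 𝓗 (w i) (w (i + 1)) =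
        (∑ i ∈ Finset.range m₁, eStep 𝓗 (z₁ i) (z₁ (i + 1))) +
        ∑ i ∈ Finset.range m₂, eStep 𝓗 (z₂ i) (z₂ (i + 1)) := by
      rw [Finset.sum_range_add]
      congr 1
      · apply Finset.sum_congr rfl
        intro i hi
        have hi' : i < m₁ := Finset.mem_range.mp hi
        have h1 : w i = z₁ i := by simp [hw, hi'.le]
        have hi'' : i + 1 ≤ m₁ := hi'
        have h2 : w (i + 1) = z₁ (i + 1) := by simp [hw, hi'']
        rw [h1, h2]
      · apply Finset.sum_congr rfl
        intro j hj
        have h2 : w (m₁ + j + 1) = z₂ (j + 1) := by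
          have : ¬ m₁ + j + 1 ≤ m₁ := by omega
          simp only [hw, this, if_false]
          congr 1
          omega
        have h1 : w (m₁ + j) = z₂ j := by
          by_cases h : j = 0
          · subst h
            simp only [hw, Nat.add_zero, le_refl, if_pos]
            rw [h11, ← h20]
          · have : ¬ m₁ + j ≤ m₁ := by omega
            simp only [hw, this, if_false, Nat.add_sub_cancel_left]
        rw [h1, h2]
    rw [eDist_eq]
    exact csInf_le (eSet_bddBelow 𝓗 x z) ⟨m₁ + m₂, w, hw0, hwend, hsum.symm⟩
  have h1 : ∀ a ∈ eSet 𝓗 x y, eDist 𝓗 x z - a ≤ eDist 𝓗 y z := by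
    intro a ha
    rw [eDist_eq 𝓗 y z]
    apply le_csInf (eSet_nonempty 𝓗 y z)
    intro b hb
    linarith [key a ha b hb]
  have h2 : eDist 𝓗 x z - eDist 𝓗 y z ≤ eDist 𝓗 x y := by
    rw [eDist_eq 𝓗 x y]
    apply le_csInf (eSet_nonempty 𝓗 x y)
    intro a ha
    linarith [h1 a ha]
  linarith

lemma eDist_le_chain (𝓗 : Set (Set X)) (m : ℕ) (z : ℕ → X) :
    eDist 𝓗 (z 0) (z m) ≤ ∑ i ∈ Finset.range m, eDist 𝓗 (z i) (z (i + 1)) := by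
  induction m with
  | zero => simpa using eDist_self_nonpos 𝓗 (z 0)
  | succ m ih =>
      rw [Finset.sum_range_succ]
      calc eDist 𝓗 (z 0) (z (m + 1)) ≤ eDist 𝓗 (z 0) (z m) + eDist 𝓗 (z m) (z (m + 1)) :=
            eDist_triangle' 𝓗 _ _ _
        _ ≤ _ := by linarith [ih]

end ElecAux

/-- Let `X` be a length space, `𝓚` a collection of subsets and, for each
`K ∈ 𝓚`, let `CH K ⊇ K`; let `d₁` and `d₂` be the electric pseudometrics obtained by
electrocuting the members of `𝓚` and of `𝓒 = CH '' 𝓚` respectively. If every `C ∈ 𝓒` has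
`d₁`-diameter at most `n`, then the identity map is a quasi-isometry from `(X,d₁)` to
`(X,d₂)` with constants depending only on `n`: `d₂ ≤ d₁` pointwise, and there is `A = A n`
with `d₁ ≤ A·d₂ + A` pointwise. -/
theorem electrocution_of_hulls_quasiisometry (n : ℕ) :
    ∃ A : ℝ, 0 ≤ A ∧
      ∀ (X : Type) [MetricSpace X], IsLengthSpace X →
        ∀ (𝓚 : Set (Set X)) (CH : Set X → Set X),
          (∀ K ∈ 𝓚, K ⊆ CH K) →
          (∀ K ∈ 𝓚, ∀ x ∈ CH K, ∀ y ∈ CH K, eDist 𝓚 x y ≤ (n : ℝ)) →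
          (∀ x y : X, eDist (CH '' 𝓚) x y ≤ eDist 𝓚 x y) ∧
          (∀ x y : X, eDist 𝓚 x y ≤ A * eDist (CH '' 𝓚) x y + A) := by
  set A : ℝ := max 1 ((n : ℝ) / 2) with hA
  have hA1 : (1 : ℝ) ≤ A := le_max_left _ _
  have hAn : (n : ℝ) / 2 ≤ A := le_max_right _ _
  have hA0 : (0 : ℝ) < A := lt_of_lt_of_le one_pos hA1
  refine ⟨A, hA0.le, ?_⟩
  intro X _ _ 𝓚 CH hsub hdiam
  set 𝓒 : Set (Set X) := CH '' 𝓚 with h𝓒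
  -- step comparison
  have hstep12 : ∀ u v : X, eStep 𝓒 u v ≤ eStep 𝓚 u v := by
    intro u v
    by_cases h : sameH 𝓚 u v
    · obtain ⟨K, hK, huK, hvK⟩ := h
      have h' : sameH 𝓒 u v := ⟨CH K, ⟨K, hK, rfl⟩, hsub K hK huK, hsub K hK hvK⟩
      unfold eStep
      rw [if_pos h', if_pos ⟨K, hK, huK, hvK⟩]
    · calc eStep 𝓒 u v ≤ dist u v := eStep_le_dist _ _ _
        _ = eStep 𝓚 u v := by unfold eStep; rw [if_neg h]
  constructor
  · -- d₂ ≤ d₁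
    intro x y
    rw [eDist_eq 𝓚 x y]
    apply le_csInf (eSet_nonempty 𝓚 x y)
    rintro r ⟨m, z, h0, h1, rfl⟩
    calc eDist 𝓒 x y ≤ ∑ i ∈ Finset.range m, eStep 𝓒 (z i) (z (i + 1)) := by
          rw [eDist_eq]
          exact csInf_le (eSet_bddBelow 𝓒 x y) ⟨m, z, h0, h1, rfl⟩
      _ ≤ ∑ i ∈ Finset.range m, eStep 𝓚 (z i) (z (i + 1)) :=
          Finset.sum_le_sum fun i _ => hstep12 _ _
  · -- d₁ ≤ A·d₂ + A
    intro x y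
    -- key per-step bound
    have key : ∀ u v : X, eDist 𝓚 u v ≤ A * eStep 𝓒 u v := by
      intro u v
      by_cases h : sameH 𝓒 u v
      · obtain ⟨C, hC, huC, hvC⟩ := h
        obtain ⟨K, hK, rfl⟩ := hC
        have hn : eDist 𝓚 u v ≤ (n : ℝ) := hdiam K hK u huC v hvC
        have hd : eDist 𝓚 u v ≤ dist u v :=
          (eDist_le_eStep 𝓚 u v).trans (eStep_le_dist 𝓚 u v)
        have hsame : sameH 𝓒 u v := ⟨CH K, ⟨K, hK, rfl⟩, huC, hvC⟩
        unfold eStep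
        rw [if_pos hsame]
        rcases le_or_gt (dist u v) 2 with hle | hlt
        · rw [min_eq_left hle]
          calc eDist 𝓚 u v ≤ dist u v := hd
            _ ≤ A * dist u v := le_mul_of_one_le_left dist_nonneg hA1
        · rw [min_eq_right hlt.le]
          calc eDist 𝓚 u v ≤ (n : ℝ) := hn
            _ ≤ A * 2 := by linarith
      · have hd : eDist 𝓚 u v ≤ dist u v :=
          (eDist_le_eStep 𝓚 u v).trans (eStep_le_dist 𝓚 u v)
        unfold eStep
        rw [if_neg h]
        calc eDist 𝓚 u v ≤ dist u v := hd
          _ ≤ A * dist u v := le_mul_of_one_le_left dist_nonneg hA1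
    have hmul : eDist 𝓚 x y ≤ A * eDist 𝓒 x y := by
      have hdiv : eDist 𝓚 x y / A ≤ eDist 𝓒 x y := by
        rw [eDist_eq 𝓒 x y]
        apply le_csInf (eSet_nonempty 𝓒 x y)
        rintro r ⟨m, z, h0, h1, rfl⟩
        rw [div_le_iff₀ hA0]
        calc eDist 𝓚 x y = eDist 𝓚 (z 0) (z m) := by rw [h0, h1]
          _ ≤ ∑ i ∈ Finset.range m, eDist 𝓚 (z i) (z (i + 1)) := eDist_le_chain 𝓚 m z
          _ ≤ ∑ i ∈ Finset.range m, A * eStep 𝓒 (z i) (z (i + 1)) :=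
              Finset.sum_le_sum fun i _ => key _ _
          _ = A * ∑ i ∈ Finset.range m, eStep 𝓒 (z i) (z (i + 1)) := by
              rw [Finset.mul_sum]
          _ = (∑ i ∈ Finset.range m, eStep 𝓒 (z i) (z (i + 1))) * A := mul_comm _ _
      calc eDist 𝓚 x y = eDist 𝓚 x y / A * A := by field_simp
        _ ≤ eDist 𝓒 x y * A := mul_le_mul_of_nonneg_right hdiv hA0.le
        _ = A * eDist 𝓒 x y := mul_comm _ _
    linarith
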